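/- In the odd-case algebra of integrals with nonzero brackets {F_i,G_j} = −∏_{l=0}^{κ}(F_{i−κ+l}G_{j−l} − CH) / ∏_{l=1}^{κ}(F_{i−κ+l−1}G_{j−l} + CH) for κ = i+j−m−1 ≥ 0 (and 0 for κ<0), the functions L_k = (F_{k+1}G_{m−k} − CH)/(F_{k+1}G_{m−k−1} + CH) Poisson-commute with F_i for all m−1−l ≤ i ≤ m−1 and 1 ≤ k ≤ m−l−3: {F_i, L_k} = 0. -/

import Mathlib

noncomputable def pd {n : ℕ} (i : Fin n) (f : (Fin n → ℝ) → ℝ) (x : Fin n → ℝ) : ℝ :=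
  fderiv ℝ f x (Pi.single i 1)

noncomputable def pb {n : ℕ} (P : Fin n → Fin n → (Fin n → ℝ) → ℝ)
    (f g : (Fin n → ℝ) → ℝ) (x : Fin n → ℝ) : ℝ :=
  ∑ i : Fin n, ∑ j : Fin n, P i j x * pd i f x * pd j g x

def get {n : ℕ} (x : Fin n → ℝ) (i : ℕ) : ℝ := if h : i < n then x ⟨i, h⟩ else 0

/- Abstract odd-case algebra of integrals: `2m-2` independent variables,
coordinate `0` is `H`, coordinate `1` is `C`, coordinates `2,…,m-1` are
`F_2,…,F_{m-1}`, and coordinates `m,…,2m-3` are `G_2,…,G_{m-1}`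
(`G_j` at index `(m-2)+j`). -/

/-- The value of the bracket `{F_i, G_j}` in the odd case: `0` if
`κ = i+j-m-1 < 0`, and otherwise
`-∏_{l=0}^{κ}(F_{i-κ+l} G_{j-l} - CH) / ∏_{l=1}^{κ}(F_{i-κ+l-1} G_{j-l} + CH)`. -/
noncomputable def poFG (m i j : ℕ) (y : Fin (2*m-2) → ℝ) : ℝ :=
  if i + j < m + 1 then 0
  else
    -((∏ l ∈ Finset.range ((i+j-(m+1))+1),
        (get y (i-(i+j-(m+1))+l) * get y ((m-2)+(j-l)) - get y 1 * get y 0)) /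
      (∏ l ∈ Finset.Icc 1 (i+j-(m+1)),
        (get y (i-(i+j-(m+1))+l-1) * get y ((m-2)+(j-l)) + get y 1 * get y 0)))

/-- The odd-case structure matrix: `H` and `C` are Casimirs,
`{F_i,F_j} = {G_i,G_j} = 0`, and `{F_i,G_j}` as in `poFG`, extended
antisymmetrically. -/
noncomputable def Podd (m : ℕ) : Fin (2*m-2) → Fin (2*m-2) → (Fin (2*m-2) → ℝ) → ℝ :=
  fun a b y =>
    if 2 ≤ (a:ℕ) ∧ (a:ℕ) ≤ m-1 ∧ m ≤ (b:ℕ) then poFG m (a:ℕ) ((b:ℕ)-(m-2)) y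
    else if 2 ≤ (b:ℕ) ∧ (b:ℕ) ≤ m-1 ∧ m ≤ (a:ℕ) then -(poFG m (b:ℕ) ((a:ℕ)-(m-2)) y)
    else 0

/-- `L_k = (F_{k+1} G_{m-k} - CH)/(F_{k+1} G_{m-k-1} + CH)`. -/
noncomputable def Lfun (m k : ℕ) : (Fin (2*m-2) → ℝ) → ℝ := fun y =>
  (get y (k+1) * get y ((m-2)+(m-k)) - get y 1 * get y 0) /
  (get y (k+1) * get y ((m-2)+(m-k-1)) + get y 1 * get y 0)

lemma get_eq {n : ℕ} (x : Fin n → ℝ) (i : ℕ) (h : i < n) : get x i = x ⟨i, h⟩ := dif_pos h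

lemma pd_ratfun {n : ℕ} (a1 b1 b2 c1 c0 : Fin n) (y : Fin n → ℝ)
    (hD : y a1 * y b2 + y c1 * y c0 ≠ 0) (b : Fin n) :
    pd b (fun x => (x a1 * x b1 - x c1 * x c0) / (x a1 * x b2 + x c1 * x c0)) y
      = ((if a1 = b then y b1 else 0) + (if b1 = b then y a1 else 0)
          - (if c1 = b then y c0 else 0) - (if c0 = b then y c1 else 0))
          / (y a1 * y b2 + y c1 * y c0)
        - (y a1 * y b1 - y c1 * y c0) / (y a1 * y b2 + y c1 * y c0)^2 *
          ((if a1 = b then y b2 else 0) + (if b2 = b then y a1 else 0)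
            + (if c1 = b then y c0 else 0) + (if c0 = b then y c1 else 0)) := by
  have pa1 : HasFDerivAt (fun x : Fin n → ℝ => x a1) (ContinuousLinearMap.proj a1 : (Fin n → ℝ) →L[ℝ] ℝ) y :=
    (ContinuousLinearMap.proj a1 : (Fin n → ℝ) →L[ℝ] ℝ).hasFDerivAt
  have pb1 : HasFDerivAt (fun x : Fin n → ℝ => x b1) (ContinuousLinearMap.proj b1 : (Fin n → ℝ) →L[ℝ] ℝ) y :=
    (ContinuousLinearMap.proj b1 : (Fin n → ℝ) →L[ℝ] ℝ).hasFDerivAt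
  have pb2 : HasFDerivAt (fun x : Fin n → ℝ => x b2) (ContinuousLinearMap.proj b2 : (Fin n → ℝ) →L[ℝ] ℝ) y :=
    (ContinuousLinearMap.proj b2 : (Fin n → ℝ) →L[ℝ] ℝ).hasFDerivAt
  have pc1 : HasFDerivAt (fun x : Fin n → ℝ => x c1) (ContinuousLinearMap.proj c1 : (Fin n → ℝ) →L[ℝ] ℝ) y :=
    (ContinuousLinearMap.proj c1 : (Fin n → ℝ) →L[ℝ] ℝ).hasFDerivAt
  have pc0 : HasFDerivAt (fun x : Fin n → ℝ => x c0) (ContinuousLinearMap.proj c0 : (Fin n → ℝ) →L[ℝ] ℝ) y :=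
    (ContinuousLinearMap.proj c0 : (Fin n → ℝ) →L[ℝ] ℝ).hasFDerivAt
  have hN : HasFDerivAt (fun x : Fin n → ℝ => x a1 * x b1 - x c1 * x c0)
      (y a1 • (ContinuousLinearMap.proj b1 : (Fin n → ℝ) →L[ℝ] ℝ)
        + y b1 • (ContinuousLinearMap.proj a1 : (Fin n → ℝ) →L[ℝ] ℝ)
        - (y c1 • (ContinuousLinearMap.proj c0 : (Fin n → ℝ) →L[ℝ] ℝ)
          + y c0 • (ContinuousLinearMap.proj c1 : (Fin n → ℝ) →L[ℝ] ℝ))) y :=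
    (pa1.mul pb1).sub (pc1.mul pc0)
  have hDf : HasFDerivAt (fun x : Fin n → ℝ => x a1 * x b2 + x c1 * x c0)
      (y a1 • (ContinuousLinearMap.proj b2 : (Fin n → ℝ) →L[ℝ] ℝ)
        + y b2 • (ContinuousLinearMap.proj a1 : (Fin n → ℝ) →L[ℝ] ℝ)
        + (y c1 • (ContinuousLinearMap.proj c0 : (Fin n → ℝ) →L[ℝ] ℝ)
          + y c0 • (ContinuousLinearMap.proj c1 : (Fin n → ℝ) →L[ℝ] ℝ))) y :=
    (pa1.mul pb2).add (pc1.mul pc0)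
  have hinv : HasFDerivAt (fun x : Fin n → ℝ => (x a1 * x b2 + x c1 * x c0)⁻¹)
      ((-((y a1 * y b2 + y c1 * y c0) ^ 2)⁻¹ : ℝ) •
        (y a1 • (ContinuousLinearMap.proj b2 : (Fin n → ℝ) →L[ℝ] ℝ)
          + y b2 • (ContinuousLinearMap.proj a1 : (Fin n → ℝ) →L[ℝ] ℝ)
          + (y c1 • (ContinuousLinearMap.proj c0 : (Fin n → ℝ) →L[ℝ] ℝ)
            + y c0 • (ContinuousLinearMap.proj c1 : (Fin n → ℝ) →L[ℝ] ℝ)))) y :=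
    (hasDerivAt_inv hD).comp_hasFDerivAt y hDf
  have hL := hN.mul hinv
  rw [show (fun x : Fin n → ℝ => (x a1 * x b1 - x c1 * x c0) / (x a1 * x b2 + x c1 * x c0))
      = fun x : Fin n → ℝ => (x a1 * x b1 - x c1 * x c0) * (x a1 * x b2 + x c1 * x c0)⁻¹
      from funext fun x => div_eq_mul_inv _ _]
  rw [pd, HasFDerivAt.fderiv (f := fun x : Fin n → ℝ => (x a1 * x b1 - x c1 * x c0) * (x a1 * x b2 + x c1 * x c0)⁻¹) hL]
  simp only [ContinuousLinearMap.add_apply, ContinuousLinearMap.smul_apply,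
    ContinuousLinearMap.sub_apply, ContinuousLinearMap.proj_apply, Pi.single_apply,
    smul_eq_mul, ContinuousLinearMap.coe_smul', Pi.smul_apply]
  field_simp
  split_ifs <;> ring

lemma pd_coord {n : ℕ} (j a : Fin n) (y : Fin n → ℝ) :
    pd a (fun x => x j) y = if j = a then 1 else 0 := by
  have hp : HasFDerivAt (fun x : Fin n → ℝ => x j)
      (ContinuousLinearMap.proj j : (Fin n → ℝ) →L[ℝ] ℝ) y :=
    (ContinuousLinearMap.proj j : (Fin n → ℝ) →L[ℝ] ℝ).hasFDerivAt
  rw [pd, hp.fderiv]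
  simp [ContinuousLinearMap.proj_apply, Pi.single_apply]

lemma alg_aux (A B N D : ℝ) (hD : D ≠ 0) : -(A*N/(B*D))*D = -(A/B)*N := by
  rcases eq_or_ne B 0 with hB | hB
  · simp [hB]
  · field_simp

/-- The functions `L_k` Poisson-commute with `F_i` for all `m-1-l ≤ i ≤ m-1` and
`1 ≤ k ≤ m-l-3`: `{F_i, L_k} = 0`. -/
theorem odd_FL_commute (m l : ℕ) (hm : 4 ≤ m) (hl : l ≤ m - 4)
    (i k : ℕ) (hi1 : m-1-l ≤ i) (hi2 : i ≤ m-1) (hk1 : 1 ≤ k) (hk2 : k ≤ m-l-3)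
    (y : Fin (2*m-2) → ℝ)
    (hden : ∀ a b : ℕ, 2 ≤ a → a ≤ m-1 → 2 ≤ b → b ≤ m-1 →
      get y a * get y ((m-2)+b) + get y 1 * get y 0 ≠ 0) :
    pb (Podd m) (fun y => get y i) (Lfun m k) y = 0 := by
  have hml : l + 4 ≤ m := by omega
  have hkm : k + l + 3 ≤ m := by omega
  have hik : k + 2 ≤ i := by omega
  have hiF : i < 2*m-2 := by omega
  have ha1 : k+1 < 2*m-2 := by omega
  have hb1 : (m-2)+(m-k) < 2*m-2 := by omega
  have hb2 : (m-2)+(m-k-1) < 2*m-2 := by omega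
  have hc1 : 1 < 2*m-2 := by omega
  have hc0 : 0 < 2*m-2 := by omega
  have hgetF : (fun y : Fin (2*m-2) → ℝ => get y i) = fun y => y ⟨i, hiF⟩ :=
    funext fun y => get_eq y i hiF
  -- pd of F_i
  have hpdF : ∀ a : Fin (2*m-2), pd a (fun y => get y i) y
      = if (⟨i, hiF⟩ : Fin (2*m-2)) = a then 1 else 0 := by
    intro a
    rw [hgetF]
    exact pd_coord _ _ _
  -- Lfun in coordinate form
  have hLeq : Lfun m k = fun x : Fin (2*m-2) → ℝ =>
      (x ⟨k+1, ha1⟩ * x ⟨(m-2)+(m-k), hb1⟩ - x ⟨1, hc1⟩ * x ⟨0, hc0⟩) /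
      (x ⟨k+1, ha1⟩ * x ⟨(m-2)+(m-k-1), hb2⟩ + x ⟨1, hc1⟩ * x ⟨0, hc0⟩) := by
    funext x
    simp only [Lfun]
    rw [get_eq x (k+1) ha1, get_eq x ((m-2)+(m-k)) hb1, get_eq x ((m-2)+(m-k-1)) hb2,
      get_eq x 1 hc1, get_eq x 0 hc0]
  have hDne : y ⟨k+1, ha1⟩ * y ⟨(m-2)+(m-k-1), hb2⟩ + y ⟨1, hc1⟩ * y ⟨0, hc0⟩ ≠ 0 := by
    have h := hden (k+1) (m-k-1) (by omega) (by omega) (by omega) (by omega)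
    rwa [get_eq y (k+1) ha1, get_eq y ((m-2)+(m-k-1)) hb2, get_eq y 1 hc1,
      get_eq y 0 hc0] at h
  have hpdL : ∀ b : Fin (2*m-2), pd b (Lfun m k) y
      = ((if (⟨k+1, ha1⟩ : Fin (2*m-2)) = b then y ⟨(m-2)+(m-k), hb1⟩ else 0)
          + (if (⟨(m-2)+(m-k), hb1⟩ : Fin (2*m-2)) = b then y ⟨k+1, ha1⟩ else 0)
          - (if (⟨1, hc1⟩ : Fin (2*m-2)) = b then y ⟨0, hc0⟩ else 0)
          - (if (⟨0, hc0⟩ : Fin (2*m-2)) = b then y ⟨1, hc1⟩ else 0))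
          / (y ⟨k+1, ha1⟩ * y ⟨(m-2)+(m-k-1), hb2⟩ + y ⟨1, hc1⟩ * y ⟨0, hc0⟩)
        - (y ⟨k+1, ha1⟩ * y ⟨(m-2)+(m-k), hb1⟩ - y ⟨1, hc1⟩ * y ⟨0, hc0⟩)
          / (y ⟨k+1, ha1⟩ * y ⟨(m-2)+(m-k-1), hb2⟩ + y ⟨1, hc1⟩ * y ⟨0, hc0⟩)^2 *
          ((if (⟨k+1, ha1⟩ : Fin (2*m-2)) = b then y ⟨(m-2)+(m-k-1), hb2⟩ else 0)
            + (if (⟨(m-2)+(m-k-1), hb2⟩ : Fin (2*m-2)) = b then y ⟨k+1, ha1⟩ else 0)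
            + (if (⟨1, hc1⟩ : Fin (2*m-2)) = b then y ⟨0, hc0⟩ else 0)
            + (if (⟨0, hc0⟩ : Fin (2*m-2)) = b then y ⟨1, hc1⟩ else 0)) := by
    intro b
    rw [hLeq]
    exact pd_ratfun _ _ _ _ _ y hDne b
  -- key product identity
  have key : poFG m i (m-k) y *
        (get y (k+1) * get y ((m-2)+(m-k-1)) + get y 1 * get y 0)
      = poFG m i (m-k-1) y *
        (get y (k+1) * get y ((m-2)+(m-k)) - get y 1 * get y 0) := by
    rw [poFG, if_neg (by omega : ¬ (i + (m-k) < m + 1)),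
        poFG, if_neg (by omega : ¬ (i + (m-k-1) < m + 1))]
    rw [show i + (m-k) - (m+1) = i-k-1 from by omega,
        show i + (m-k-1) - (m+1) = i-k-2 from by omega,
        show i - (i-k-1) = k+1 from by omega,
        show i - (i-k-2) = k+2 from by omega]
    have eA : (∏ l ∈ Finset.range ((i-k-1)+1),
          (get y (k+1+l) * get y ((m-2)+(m-k-l)) - get y 1 * get y 0))
        = (∏ l ∈ Finset.range ((i-k-2)+1),
            (get y (k+2+l) * get y ((m-2)+(m-k-1-l)) - get y 1 * get y 0)) *
          (get y (k+1) * get y ((m-2)+(m-k)) - get y 1 * get y 0) := by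
      rw [Finset.prod_range_succ']
      congr 1
      · rw [show (i-k-2)+1 = i-k-1 from by omega]
        apply Finset.prod_congr rfl
        intro x _
        rw [show k+1+(x+1) = k+2+x from by omega,
            show m-k-(x+1) = m-k-1-x from by omega]
    have eB : (∏ l ∈ Finset.Icc 1 (i-k-1),
          (get y (k+1+l-1) * get y ((m-2)+(m-k-l)) + get y 1 * get y 0))
        = (∏ l ∈ Finset.Icc 1 (i-k-2),
            (get y (k+2+l-1) * get y ((m-2)+(m-k-1-l)) + get y 1 * get y 0)) *
          (get y (k+1) * get y ((m-2)+(m-k-1)) + get y 1 * get y 0) := by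
      rw [← Finset.Ico_add_one_right_eq_Icc, Finset.prod_Ico_eq_prod_range,
          ← Finset.Ico_add_one_right_eq_Icc, Finset.prod_Ico_eq_prod_range]
      rw [show (i-k-1)+1-1 = (i-k-2)+1 from by omega,
          show (i-k-2)+1-1 = i-k-2 from by omega,
          Finset.prod_range_succ']
      congr 1
      · apply Finset.prod_congr rfl
        intro x _
        rw [show k+1+(1+(x+1))-1 = k+2+(1+x)-1 from by omega,
            show m-k-(1+(x+1)) = m-k-1-(1+x) from by omega]
    rw [eA, eB]
    exact alg_aux _ _ _ _ (hden (k+1) (m-k-1) (by omega) (by omega) (by omega) (by omega))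
  rw [get_eq y (k+1) ha1, get_eq y ((m-2)+(m-k)) hb1, get_eq y ((m-2)+(m-k-1)) hb2,
      get_eq y 1 hc1, get_eq y 0 hc0] at key
  -- now compute the double sum
  unfold pb
  rw [Finset.sum_eq_single (⟨i, hiF⟩ : Fin (2*m-2))]
  rotate_left
  · intro a _ ha
    apply Finset.sum_eq_zero
    intro b _
    rw [hpdF a, if_neg (fun h => ha h.symm)]
    ring
  · intro h
    exact absurd (Finset.mem_univ _) h
  rw [Finset.sum_eq_add (⟨(m-2)+(m-k), hb1⟩ : Fin (2*m-2)) (⟨(m-2)+(m-k-1), hb2⟩ : Fin (2*m-2))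
      (by simp only [ne_eq, Fin.mk.injEq]; omega)
      ?_ (fun h => absurd (Finset.mem_univ _) h) (fun h => absurd (Finset.mem_univ _) h)]
  rotate_left
  · intro c _ hc
    obtain ⟨hcb1, hcb2⟩ := hc
    have hb1' : (c:ℕ) ≠ (m-2)+(m-k) := by simpa [Fin.ext_iff] using hcb1
    have hb2' : (c:ℕ) ≠ (m-2)+(m-k-1) := by simpa [Fin.ext_iff] using hcb2
    by_cases hspec : (c:ℕ) = k+1 ∨ (c:ℕ) ≤ 1
    · have hP0 : Podd m ⟨i, hiF⟩ c y = 0 := by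
        simp only [Podd]
        rw [if_neg (fun h => by
              have h3 : m ≤ (c:ℕ) := h.2.2
              omega),
            if_neg (fun h => by
              have h3 : m ≤ i := h.2.2
              omega)]
      rw [hP0]
      ring
    · have hna1 : ¬((⟨k+1, ha1⟩ : Fin (2*m-2)) = c) := fun h => by
        have h3 : k+1 = (c:ℕ) := congrArg Fin.val h
        omega
      have hnb1 : ¬((⟨(m-2)+(m-k), hb1⟩ : Fin (2*m-2)) = c) := fun h => by
        have h3 : (m-2)+(m-k) = (c:ℕ) := congrArg Fin.val h
        omega
      have hnb2 : ¬((⟨(m-2)+(m-k-1), hb2⟩ : Fin (2*m-2)) = c) := fun h => by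
        have h3 : (m-2)+(m-k-1) = (c:ℕ) := congrArg Fin.val h
        omega
      have hnc1 : ¬((⟨1, hc1⟩ : Fin (2*m-2)) = c) := fun h => by
        have h3 : (1:ℕ) = (c:ℕ) := congrArg Fin.val h
        omega
      have hnc0 : ¬((⟨0, hc0⟩ : Fin (2*m-2)) = c) := fun h => by
        have h3 : (0:ℕ) = (c:ℕ) := congrArg Fin.val h
        omega
      have hpd0 : pd c (Lfun m k) y = 0 := by
        rw [hpdL c]
        simp only [if_neg hna1, if_neg hnb1, if_neg hnb2, if_neg hnc1, if_neg hnc0]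
        ring
      rw [hpd0]
      ring
  -- the two surviving terms
  have hP1 : Podd m ⟨i, hiF⟩ ⟨(m-2)+(m-k), hb1⟩ y = poFG m i (m-k) y := by
    simp only [Podd]
    rw [if_pos ⟨show 2 ≤ i from by omega, show i ≤ m-1 from by omega,
        show m ≤ (m-2)+(m-k) from by omega⟩]
    show poFG m i ((m-2)+(m-k) - (m-2)) y = _
    rw [show (m-2)+(m-k) - (m-2) = m-k from by omega]
  have hP2 : Podd m ⟨i, hiF⟩ ⟨(m-2)+(m-k-1), hb2⟩ y = poFG m i (m-k-1) y := by
    simp only [Podd]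
    rw [if_pos ⟨show 2 ≤ i from by omega, show i ≤ m-1 from by omega,
        show m ≤ (m-2)+(m-k-1) from by omega⟩]
    show poFG m i ((m-2)+(m-k-1) - (m-2)) y = _
    rw [show (m-2)+(m-k-1) - (m-2) = m-k-1 from by omega]
  have q1 : ¬((⟨k+1, ha1⟩ : Fin (2*m-2)) = ⟨(m-2)+(m-k), hb1⟩) := by
    simp only [Fin.mk.injEq]; omega
  have q2 : ¬((⟨k+1, ha1⟩ : Fin (2*m-2)) = ⟨(m-2)+(m-k-1), hb2⟩) := by
    simp only [Fin.mk.injEq]; omega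
  have q3 : ¬((⟨1, hc1⟩ : Fin (2*m-2)) = ⟨(m-2)+(m-k), hb1⟩) := by
    simp only [Fin.mk.injEq]; omega
  have q4 : ¬((⟨1, hc1⟩ : Fin (2*m-2)) = ⟨(m-2)+(m-k-1), hb2⟩) := by
    simp only [Fin.mk.injEq]; omega
  have q5 : ¬((⟨0, hc0⟩ : Fin (2*m-2)) = ⟨(m-2)+(m-k), hb1⟩) := by
    simp only [Fin.mk.injEq]; omega
  have q6 : ¬((⟨0, hc0⟩ : Fin (2*m-2)) = ⟨(m-2)+(m-k-1), hb2⟩) := by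
    simp only [Fin.mk.injEq]; omega
  have q7 : ¬((⟨(m-2)+(m-k-1), hb2⟩ : Fin (2*m-2)) = ⟨(m-2)+(m-k), hb1⟩) := by
    simp only [Fin.mk.injEq]; omega
  have q8 : ¬((⟨(m-2)+(m-k), hb1⟩ : Fin (2*m-2)) = ⟨(m-2)+(m-k-1), hb2⟩) := by
    simp only [Fin.mk.injEq]; omega
  have hv1 : pd (⟨(m-2)+(m-k), hb1⟩ : Fin (2*m-2)) (Lfun m k) y
      = y ⟨k+1, ha1⟩ / (y ⟨k+1, ha1⟩ * y ⟨(m-2)+(m-k-1), hb2⟩ + y ⟨1, hc1⟩ * y ⟨0, hc0⟩) := by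
    rw [hpdL]
    simp only [if_neg q1, if_neg q3, if_neg q5, if_neg q7, eq_self_iff_true, if_true]
    ring
  have hv2 : pd (⟨(m-2)+(m-k-1), hb2⟩ : Fin (2*m-2)) (Lfun m k) y
      = -((y ⟨k+1, ha1⟩ * y ⟨(m-2)+(m-k), hb1⟩ - y ⟨1, hc1⟩ * y ⟨0, hc0⟩)
          / (y ⟨k+1, ha1⟩ * y ⟨(m-2)+(m-k-1), hb2⟩ + y ⟨1, hc1⟩ * y ⟨0, hc0⟩)^2
          * y ⟨k+1, ha1⟩) := by
    rw [hpdL]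
    simp only [if_neg q2, if_neg q4, if_neg q6, if_neg q8, eq_self_iff_true, if_true]
    ring
  rw [hP1, hP2, hv1, hv2, hpdF, if_pos rfl]
  have hexp : poFG m i (m-k) y * 1 *
        (y ⟨k+1, ha1⟩ / (y ⟨k+1, ha1⟩ * y ⟨(m-2)+(m-k-1), hb2⟩ + y ⟨1, hc1⟩ * y ⟨0, hc0⟩))
      + poFG m i (m-k-1) y * 1 *
        (-((y ⟨k+1, ha1⟩ * y ⟨(m-2)+(m-k), hb1⟩ - y ⟨1, hc1⟩ * y ⟨0, hc0⟩)
          / (y ⟨k+1, ha1⟩ * y ⟨(m-2)+(m-k-1), hb2⟩ + y ⟨1, hc1⟩ * y ⟨0, hc0⟩)^2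
          * y ⟨k+1, ha1⟩))
      = (poFG m i (m-k) y *
          (y ⟨k+1, ha1⟩ * y ⟨(m-2)+(m-k-1), hb2⟩ + y ⟨1, hc1⟩ * y ⟨0, hc0⟩)
        - poFG m i (m-k-1) y *
          (y ⟨k+1, ha1⟩ * y ⟨(m-2)+(m-k), hb1⟩ - y ⟨1, hc1⟩ * y ⟨0, hc0⟩))
        * y ⟨k+1, ha1⟩
        / (y ⟨k+1, ha1⟩ * y ⟨(m-2)+(m-k-1), hb2⟩ + y ⟨1, hc1⟩ * y ⟨0, hc0⟩)^2 := by
    field_simp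
    ring
  rw [hexp, key, sub_self, zero_mul, zero_div]
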